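/- arXiv:1207.5809 — 3 statements merged into one kernel-verified Lean document; each statement's English description precedes it below -/
import Mathlib

section
/- Let γ>0, β∈(0,1], T>0. Suppose a:[0,T]→ℝ₊ is measurable, k≥0 is a constant, and v:[0,T]→ℝ₊ satisfies the integral equation v(r) = k + a(r) − γ∫_r^T v(s)^{1+β} ds for all 0≤r≤T. Then v(t) ≤ a(t) + k/(1+γβ(T−t)k^β)^{1/β} for all 0≤t≤T. -/
open MeasureTheory Set

/-! The function `w t = k (1 + γβ(T - t)k^β)^(-1/β)` solves the backward Bernoulli problem
`w' = γ w^(1+β)`, `w T = k`, i.e. `w t = k - γ ∫_t^T w^(1+β)`, while `u = v - a` satisfies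
`u t = k - γ ∫_t^T v^(1+β)` with `v ≥ u`. Let `t₁` be the first time in `[t, T]` with `u ≤ w`.
On `(t, t₁)` we have `v ≥ u > w ≥ 0`, so `∫_t^t₁ v^(1+β) ≥ ∫_t^t₁ w^(1+β)`, and comparing the
two integral equations between `t` and `t₁` gives `u t ≤ w t`. -/

section BackwardComparison

variable {a b : ℝ} {u w p q : ℝ → ℝ}

theorem continuousOn_of_eq_sub_integral {c : ℝ} (hab : a ≤ b) (hp : IntegrableOn p (Icc a b))
    (hu : ∀ t ∈ Icc a b, u t = c - ∫ s in t..b, p s) : ContinuousOn u (Icc a b) := by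
  have hprim := intervalIntegral.continuousOn_primitive_interval_left (μ := volume)
    (by rwa [uIcc_of_le hab])
  rw [uIcc_of_le hab] at hprim
  exact (continuousOn_const.sub hprim).congr hu

theorem eq_sub_integral_of_mem_Icc (hp : IntegrableOn p (Icc a b))
    (hu : ∀ t ∈ Icc a b, u t = u b - ∫ s in t..b, p s) {t : ℝ} (ht : t ∈ Icc a b) :
    u a = u t - ∫ s in a..t, p s := by
  have hab := ht.1.trans ht.2
  have hint : ∀ x ∈ Icc a b, ∀ y ∈ Icc a b, IntervalIntegrable p volume x y :=
    fun x hx y hy => (hp.mono_set (uIcc_subset_Icc hx hy)).intervalIntegrable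
  rw [hu a (left_mem_Icc.2 hab), hu t ht, ← intervalIntegral.integral_add_adjacent_intervals
    (hint a (left_mem_Icc.2 hab) t ht) (hint t ht b (right_mem_Icc.2 hab))]
  ring

theorem le_of_backward_integral_comparison (hab : a ≤ b)
    (hp : IntegrableOn p (Icc a b)) (hq : IntegrableOn q (Icc a b))
    (hu : ∀ t ∈ Icc a b, u t = u b - ∫ s in t..b, p s)
    (hw : ∀ t ∈ Icc a b, w t = w b - ∫ s in t..b, q s)
    (hb : u b ≤ w b) (hqp : ∀ t ∈ Ioo a b, w t < u t → q t ≤ p t) :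
    u a ≤ w a := by
  set S := {t ∈ Icc a b | u t ≤ w t}
  have hS : IsClosed S := isClosed_Icc.isClosed_le
    (continuousOn_of_eq_sub_integral hab hp hu) (continuousOn_of_eq_sub_integral hab hq hw)
  have hSbdd : BddBelow S := ⟨a, fun t ht => ht.1.1⟩
  obtain ⟨ht₁, hut₁⟩ : sInf S ∈ S := hS.csInf_mem ⟨b, right_mem_Icc.2 hab, hb⟩ hSbdd
  set t₁ := sInf S
  have hsub : Icc a t₁ ⊆ Icc a b := Icc_subset_Icc_right ht₁.2
  have hmono : ∫ s in a..t₁, q s ≤ ∫ s in a..t₁, p s := by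
    refine intervalIntegral.integral_mono_on_of_le_Ioo ht₁.1
      ((hq.mono_set (uIcc_of_le ht₁.1 ▸ hsub)).intervalIntegrable)
      ((hp.mono_set (uIcc_of_le ht₁.1 ▸ hsub)).intervalIntegrable)
      fun s hs => hqp s ⟨hs.1, hs.2.trans_le ht₁.2⟩ ?_
    by_contra! hus
    exact (csInf_le hSbdd ⟨⟨hs.1.le, hs.2.le.trans ht₁.2⟩, hus⟩).not_gt hs.2
  rw [eq_sub_integral_of_mem_Icc hp hu ht₁, eq_sub_integral_of_mem_Icc hq hw ht₁]
  linarith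

end BackwardComparison

section Bernoulli

variable {γ β T k : ℝ}

noncomputable def bernoulliSolution (γ β T k t : ℝ) : ℝ :=
  k / (1 + γ * β * (T - t) * k ^ β) ^ (1 / β)

@[simp]
theorem bernoulliSolution_self : bernoulliSolution γ β T k T = k := by
  simp [bernoulliSolution]

theorem bernoulliSolution_base_pos (hγ : 0 ≤ γ) (hβ : 0 < β) (hk : 0 ≤ k) {t : ℝ} (ht : t ≤ T) :
    0 < 1 + γ * β * (T - t) * k ^ β := by
  have : 0 ≤ T - t := sub_nonneg.2 ht
  positivity

theorem bernoulliSolution_nonneg (hγ : 0 ≤ γ) (hβ : 0 < β) (hk : 0 ≤ k) {t : ℝ} (ht : t ≤ T) :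
    0 ≤ bernoulliSolution γ β T k t :=
  div_nonneg hk (Real.rpow_nonneg (bernoulliSolution_base_pos hγ hβ hk ht).le _)

theorem hasDerivAt_bernoulliSolution (hβ : 0 < β) (hk : 0 ≤ k) {t : ℝ}
    (ht : 0 < 1 + γ * β * (T - t) * k ^ β) :
    HasDerivAt (bernoulliSolution γ β T k) (γ * bernoulliSolution γ β T k t ^ (1 + β)) t := by
  set g : ℝ → ℝ := fun s => 1 + γ * β * (T - s) * k ^ β
  have hg : HasDerivAt g (γ * β * -1 * k ^ β) t :=
    ((((hasDerivAt_id t).const_sub T).const_mul (γ * β)).mul_const (k ^ β)).const_add 1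
  have hpow := (hg.rpow_const (p := -(1 / β)) (Or.inl ht.ne')).const_mul k
  have hfun : (fun s => k * g s ^ (-(1 / β))) =ᶠ[nhds t] bernoulliSolution γ β T k :=
    (hg.continuousAt.eventually (lt_mem_nhds ht)).mono fun s hs => by
      show k * g s ^ (-(1 / β)) = k / g s ^ (1 / β)
      rw [Real.rpow_neg hs.le, div_eq_mul_inv k]
  refine (hpow.congr_of_eventuallyEq hfun.symm).congr_deriv ?_
  have hsol : bernoulliSolution γ β T k t = k * g t ^ (-(1 / β)) := hfun.self_of_nhds.symm
  rw [hsol, Real.mul_rpow hk (Real.rpow_nonneg ht.le _), ← Real.rpow_mul ht.le,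
    Real.rpow_add' hk (by positivity), Real.rpow_one,
    show -(1 / β) * (1 + β) = -(1 / β) - 1 by field_simp; ring]
  simp only [g]
  rw [show γ * β * -1 * k ^ β * -(1 / β) = γ * k ^ β by field_simp]
  ring

theorem continuousOn_bernoulliSolution (hγ : 0 ≤ γ) (hβ : 0 < β) (hk : 0 ≤ k) :
    ContinuousOn (bernoulliSolution γ β T k) (Iic T) :=
  HasDerivAt.continuousOn fun _ ht =>
    hasDerivAt_bernoulliSolution hβ hk (bernoulliSolution_base_pos hγ hβ hk ht)

theorem integrableOn_bernoulliSolution_rpow (hγ : 0 ≤ γ) (hβ : 0 < β) (hk : 0 ≤ k) (t : ℝ) :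
    IntegrableOn (fun s => γ * bernoulliSolution γ β T k s ^ (1 + β)) (Icc t T) := by
  refine ContinuousOn.integrableOn_compact isCompact_Icc
    (continuousOn_const.mul (((continuousOn_bernoulliSolution hγ hβ hk).mono
      Icc_subset_Iic_self).rpow_const fun _ _ => Or.inr ?_))
  positivity

theorem bernoulliSolution_eq_sub_integral (hγ : 0 ≤ γ) (hβ : 0 < β) (hk : 0 ≤ k) {t : ℝ}
    (ht : t ≤ T) :
    bernoulliSolution γ β T k t = k - ∫ s in t..T, γ * bernoulliSolution γ β T k s ^ (1 + β) := by
  rw [intervalIntegral.integral_eq_sub_of_hasDerivAt (fun s hs => hasDerivAt_bernoulliSolution hβ hk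
    (bernoulliSolution_base_pos hγ hβ hk (uIcc_of_le ht ▸ hs).2))
    ((intervalIntegrable_iff_integrableOn_Icc_of_le ht).2
      (integrableOn_bernoulliSolution_rpow hγ hβ hk t)),
    bernoulliSolution_self]
  ring

end Bernoulli

theorem gronwall_style_lemma_general
    (γ β T k : ℝ) (hγ : 0 < γ) (hβ0 : 0 < β) (hk : 0 ≤ k)
    (a v : ℝ → ℝ)
    (ha : ∀ t ∈ Icc (0:ℝ) T, 0 ≤ a t)
    (hint : IntegrableOn (fun s => v s ^ (1 + β)) (Icc (0:ℝ) T))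
    (heq : ∀ r ∈ Icc (0:ℝ) T, v r = k + a r - γ * ∫ s in r..T, v s ^ (1 + β)) :
    ∀ t ∈ Icc (0:ℝ) T,
      v t ≤ a t + k / (1 + γ * β * (T - t) * k ^ β) ^ (1 / β) := by
  intro t ht
  have hsub : Icc t T ⊆ Icc 0 T := Icc_subset_Icc_left ht.1
  have hvT : v T - a T = k := by
    rw [heq T ⟨ht.1.trans ht.2, le_rfl⟩, intervalIntegral.integral_same]
    ring
  have hu : ∀ s ∈ Icc t T, (v - a) s = (v - a) T - ∫ r in s..T, γ * v r ^ (1 + β) := by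
    intro s hs
    rw [Pi.sub_apply, Pi.sub_apply, hvT, heq s (hsub hs), intervalIntegral.integral_const_mul]
    ring
  have hw : ∀ s ∈ Icc t T, bernoulliSolution γ β T k s = bernoulliSolution γ β T k T -
      ∫ r in s..T, γ * bernoulliSolution γ β T k r ^ (1 + β) := fun s hs => by
    rw [bernoulliSolution_self]
    exact bernoulliSolution_eq_sub_integral hγ.le hβ0 hk hs.2
  have hcomp : v t - a t ≤ bernoulliSolution γ β T k t := by
    refine le_of_backward_integral_comparison ht.2 ((hint.mono_set hsub).const_mul γ)
      (integrableOn_bernoulliSolution_rpow hγ.le hβ0 hk t) hu hw (by simp [hvT]) ?_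
    intro s hs hlt
    have hws := bernoulliSolution_nonneg hγ.le hβ0 hk hs.2.le
    have has := ha s (hsub (Ioo_subset_Icc_self hs))
    have hwv : bernoulliSolution γ β T k s ≤ v s := by simp only [Pi.sub_apply] at hlt; linarith
    gcongr
  rw [bernoulliSolution] at hcomp
  linarith

theorem gronwall_style_lemma
    (γ β T k : ℝ) (hγ : 0 < γ) (hβ0 : 0 < β) (hβ1 : β ≤ 1) (hT : 0 < T) (hk : 0 ≤ k)
    (a v : ℝ → ℝ)
    (ha_meas : Measurable a)
    (ha : ∀ t ∈ Icc (0:ℝ) T, 0 ≤ a t)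
    (hv : ∀ t ∈ Icc (0:ℝ) T, 0 ≤ v t)
    (hint : IntegrableOn (fun s => v s ^ (1 + β)) (Icc (0:ℝ) T))
    (heq : ∀ r ∈ Icc (0:ℝ) T, v r = k + a r - γ * ∫ s in r..T, v s ^ (1 + β)) :
    ∀ t ∈ Icc (0:ℝ) T,
      v t ≤ a t + k / (1 + γ * β * (T - t) * k ^ β) ^ (1 / β) :=
  gronwall_style_lemma_general γ β T k hγ hβ0 hk a v ha hint heq
end

section
/- Let T>0, β∈(0,1], γ>0, and let μ be a finite nonnegative Borel measure on [0,T] and k≥0. Suppose v:[0,T]→ℝ₊ solves v(t) = k + μ([t,T]) − γ∫_t^T v(s)^{1+β} ds for all t∈[0,T]. Then v(r) ≤ μ([r,T]) + k/(1+γβ(T−r)k^β)^{1/β} for all r, and consequently sup over k of v(r) is at most μ([r,T]) + (γβ(T−r))^{−1/β}. -/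
/-!
Writing `v t = μ([t, T]) + g t`, the function `g t = k - γ ∫ₜᵀ v ^ (1 + β)` is a subsolution of the
backward equation `w' = γ w ^ (1 + β)`, `w T = k`, because `g ≤ v`. That equation is solved
explicitly by `w t = k (1 + γ β (T - t) k ^ β) ^ (-1 / β)`, and a first-crossing argument gives
`g ≤ w`. Dropping the `1` in the base makes the bound uniform in `k`.
-/

open MeasureTheory Set

theorem nonneg_of_eq_sub_integral_of_nonpos_of_neg {a b : ℝ} {h ρ : ℝ → ℝ}
    (hρ : IntegrableOn ρ (Icc a b)) (hh : ∀ t ∈ Icc a b, h t = h b - ∫ s in t..b, ρ s)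
    (hb : 0 ≤ h b) (hρ_nonpos : ∀ s ∈ Icc a b, h s < 0 → ρ s ≤ 0) :
    ∀ t ∈ Icc a b, 0 ≤ h t := by
  intro r hr
  by_contra! hr_neg
  have hρ_int : ∀ t₁ ∈ Icc a b, ∀ t₂ ∈ Icc a b, IntervalIntegrable ρ volume t₁ t₂ :=
    fun t₁ h₁ t₂ h₂ => (hρ.mono_set (uIcc_subset_Icc h₁ h₂)).intervalIntegrable
  have hcont : ContinuousOn h (Icc a b) := by
    have hab : a ≤ b := hr.1.trans hr.2
    have hprim := intervalIntegral.continuousOn_primitive_interval_left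
      (μ := volume) (f := ρ) (by rwa [uIcc_of_le hab])
    rw [uIcc_of_le hab] at hprim
    exact (continuousOn_const.sub hprim).congr hh
  -- the first time after `r` at which `h` becomes nonnegative again
  set S := Icc r b ∩ h ⁻¹' Ici 0
  have hS_bdd : BddBelow S := ⟨r, fun t ht => ht.1.1⟩
  obtain ⟨⟨hrt, htb⟩, ht_nonneg⟩ : sInf S ∈ S :=
    ((hcont.mono (Icc_subset_Icc_left hr.1)).preimage_isClosed_of_isClosed isClosed_Icc
      isClosed_Ici).csInf_mem ⟨b, right_mem_Icc.2 hr.2, hb⟩ hS_bdd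
  set t := sInf S
  have ht : t ∈ Icc a b := ⟨hr.1.trans hrt, htb⟩
  have hneg : ∀ s ∈ Ioo r t, h s < 0 := fun s hs => by
    by_contra! hs_nonneg
    exact (csInf_le hS_bdd ⟨⟨hs.1.le, hs.2.le.trans htb⟩, hs_nonneg⟩).not_gt hs.2
  have hint : ∫ s in r..t, ρ s ≤ 0 := by
    rw [intervalIntegral.integral_of_le hrt, integral_Ioc_eq_integral_Ioo]
    exact setIntegral_nonpos measurableSet_Ioo fun s hs =>
      hρ_nonpos s ⟨hr.1.trans hs.1.le, hs.2.le.trans htb⟩ (hneg s hs)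
  have hincr : h t - h r = ∫ s in r..t, ρ s := by
    rw [hh t ht, hh r hr, ← intervalIntegral.integral_add_adjacent_intervals
      (hρ_int r hr t ht) (hρ_int t ht b (right_mem_Icc.2 (hr.1.trans hr.2)))]
    ring
  have : 0 ≤ h t := ht_nonneg
  linarith

noncomputable def blowUpProfile (γ β k T t : ℝ) : ℝ :=
  k * (1 + γ * β * (T - t) * k ^ β) ^ (-(1 / β))

section blowUpProfile

variable {γ β k T t : ℝ}

theorem one_add_mul_rpow_pos (hβ : 0 < β) (hγ : 0 ≤ γ) (hk : 0 ≤ k) (ht : t ≤ T) :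
    0 < 1 + γ * β * (T - t) * k ^ β := by
  have : 0 ≤ T - t := sub_nonneg.2 ht
  positivity

@[simp]
theorem blowUpProfile_self : blowUpProfile γ β k T T = k := by
  simp [blowUpProfile]

theorem blowUpProfile_nonneg (hβ : 0 < β) (hγ : 0 ≤ γ) (hk : 0 ≤ k) (ht : t ≤ T) :
    0 ≤ blowUpProfile γ β k T t :=
  have := one_add_mul_rpow_pos hβ hγ hk ht
  by unfold blowUpProfile; positivity

theorem blowUpProfile_eq_div (hβ : 0 < β) (hγ : 0 ≤ γ) (hk : 0 ≤ k) (ht : t ≤ T) :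
    blowUpProfile γ β k T t = k / (1 + γ * β * (T - t) * k ^ β) ^ (1 / β) := by
  rw [blowUpProfile, Real.rpow_neg (one_add_mul_rpow_pos hβ hγ hk ht).le]
  exact (div_eq_mul_inv _ _).symm

theorem hasDerivAt_blowUpProfile (hβ : 0 < β) (hγ : 0 ≤ γ) (hk : 0 ≤ k) (ht : t ≤ T) :
    HasDerivAt (blowUpProfile γ β k T) (γ * blowUpProfile γ β k T t ^ (1 + β)) t := by
  have hu := one_add_mul_rpow_pos hβ hγ hk ht
  have hbase : HasDerivAt (fun t => 1 + γ * β * (T - t) * k ^ β) (-(γ * β * k ^ β)) t :=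
    ((((hasDerivAt_id t).const_sub T).const_mul (γ * β)).mul_const (k ^ β)).const_add 1
      |>.congr_deriv (by ring)
  refine ((hbase.rpow_const (p := -(1 / β)) (Or.inl hu.ne')).const_mul k).congr_deriv ?_
  rw [blowUpProfile, Real.mul_rpow hk (by positivity), ← Real.rpow_mul hu.le,
    Real.rpow_add' hk (by positivity), Real.rpow_one,
    show -(1 / β) * (1 + β) = -(1 / β) - 1 by field_simp; ring]
  field_simp

theorem continuousOn_blowUpProfile (hβ : 0 < β) (hγ : 0 ≤ γ) (hk : 0 ≤ k) :
    ContinuousOn (blowUpProfile γ β k T) (Iic T) := fun _ ht =>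
  (hasDerivAt_blowUpProfile hβ hγ hk ht).continuousAt.continuousWithinAt

theorem blowUpProfile_eq_sub_integral (hβ : 0 < β) (hγ : 0 ≤ γ) (hk : 0 ≤ k) (ht : t ≤ T) :
    blowUpProfile γ β k T t = k - γ * ∫ s in t..T, blowUpProfile γ β k T s ^ (1 + β) := by
  have hderiv : ∀ s ∈ uIcc t T, HasDerivAt (blowUpProfile γ β k T)
      (γ * blowUpProfile γ β k T s ^ (1 + β)) s := fun s hs =>
    hasDerivAt_blowUpProfile hβ hγ hk (uIcc_of_le ht ▸ hs).2
  have hcont : ContinuousOn (fun s => γ * blowUpProfile γ β k T s ^ (1 + β)) (uIcc t T) :=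
    continuousOn_const.mul <| ((continuousOn_blowUpProfile hβ hγ hk).mono
      (uIcc_of_le ht ▸ Icc_subset_Iic_self)).rpow_const fun _ _ => Or.inr (by positivity)
  rw [← intervalIntegral.integral_const_mul,
    intervalIntegral.integral_eq_sub_of_hasDerivAt hderiv hcont.intervalIntegrable,
    blowUpProfile_self]
  ring

theorem blowUpProfile_le_rpow_neg (hβ : 0 < β) (hγ : 0 < γ) (hk : 0 ≤ k) (ht : t < T) :
    blowUpProfile γ β k T t ≤ (γ * β * (T - t)) ^ (-(1 / β)) := by
  have hD : 0 < γ * β * (T - t) := by have := sub_pos.2 ht; positivity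
  rcases hk.eq_or_lt with rfl | hk_pos
  · simpa [blowUpProfile] using (Real.rpow_nonneg hD.le _)
  have hkβ : 0 < k ^ β := Real.rpow_pos_of_pos hk_pos β
  calc blowUpProfile γ β k T t
      ≤ k * (γ * β * (T - t) * k ^ β) ^ (-(1 / β)) :=
        mul_le_mul_of_nonneg_left (Real.rpow_le_rpow_of_nonpos (by positivity) (by linarith)
          (by simp [hβ.le])) hk
    _ = (γ * β * (T - t)) ^ (-(1 / β)) := by
        rw [Real.mul_rpow hD.le hkβ.le, ← Real.rpow_mul hk, mul_neg, mul_one_div_cancel hβ.ne',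
          Real.rpow_neg_one]
        field_simp

theorem le_blowUpProfile_of_eq_sub_integral {a : ℝ} {g v : ℝ → ℝ}
    (hβ : 0 < β) (hγ : 0 ≤ γ) (hk : 0 ≤ k)
    (hv : IntegrableOn (fun s => v s ^ (1 + β)) (Icc a T)) (hgv : ∀ t ∈ Icc a T, g t ≤ v t)
    (hg : ∀ t ∈ Icc a T, g t = k - γ * ∫ s in t..T, v s ^ (1 + β)) :
    ∀ t ∈ Icc a T, g t ≤ blowUpProfile γ β k T t := by
  set w := blowUpProfile γ β k T
  have hw : IntegrableOn (fun s => w s ^ (1 + β)) (Icc a T) :=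
    (((continuousOn_blowUpProfile hβ hγ hk).mono Icc_subset_Iic_self).rpow_const
      fun _ _ => Or.inr (by positivity)).integrableOn_Icc
  have hint : ∀ t ∈ Icc a T, ∀ f : ℝ → ℝ, IntegrableOn f (Icc a T) →
      IntervalIntegrable f volume t T := fun t ht f hf =>
    (hf.mono_set (uIcc_subset_Icc ht (right_mem_Icc.2 (ht.1.trans ht.2)))).intervalIntegrable
  intro t ht
  have hgT : g T = k := by simpa using hg T (right_mem_Icc.2 (ht.1.trans ht.2))
  suffices 0 ≤ w t - g t by linarith
  refine nonneg_of_eq_sub_integral_of_nonpos_of_neg (h := fun t => w t - g t)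
    (ρ := fun s => γ * (w s ^ (1 + β) - v s ^ (1 + β))) ((hw.sub hv).const_mul γ) ?_ ?_ ?_ t ht
  · intro s hs
    have hws : w s = k - γ * ∫ x in s..T, w x ^ (1 + β) :=
      blowUpProfile_eq_sub_integral hβ hγ hk hs.2
    rw [intervalIntegral.integral_const_mul, intervalIntegral.integral_sub (hint s hs _ hw)
      (hint s hs _ hv), hws, hg s hs, hgT, show w T = k from blowUpProfile_self]
    ring
  · simp [w, hgT]
  · intro s hs hneg
    have hws : w s ≤ v s := by linarith [hgv s hs]
    exact mul_nonpos_of_nonneg_of_nonpos hγ <| sub_nonpos.2 <| Real.rpow_le_rpow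
      (blowUpProfile_nonneg hβ hγ hk hs.2) hws (by positivity)

end blowUpProfile

theorem blow_up_upper_bound_general
    (T β γ k : ℝ) (hβ0 : 0 < β) (hγ : 0 < γ) (hk : 0 ≤ k)
    (μ : Measure ℝ)
    (v : ℝ → ℝ)
    (hv_int : IntegrableOn (fun s => v s ^ (1 + β)) (Icc (0:ℝ) T))
    (heq : ∀ t ∈ Icc (0:ℝ) T,
        v t = k + (μ (Icc t T)).toReal - γ * ∫ s in t..T, v s ^ (1 + β)) :
    (∀ r ∈ Icc (0:ℝ) T,
        v r ≤ (μ (Icc r T)).toReal + k / (1 + γ * β * (T - r) * k ^ β) ^ (1 / β)) ∧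
      ∀ r ∈ Ico (0:ℝ) T,
        v r ≤ (μ (Icc r T)).toReal + (γ * β * (T - r)) ^ (-(1 / β)) := by
  have hbound : ∀ r ∈ Icc (0:ℝ) T, v r - (μ (Icc r T)).toReal ≤ blowUpProfile γ β k T r :=
    le_blowUpProfile_of_eq_sub_integral hβ0 hγ.le hk hv_int
      (fun _ _ => sub_le_self _ ENNReal.toReal_nonneg) fun t ht => by rw [heq t ht]; ring
  refine ⟨fun r hr => ?_, fun r hr => ?_⟩
  · rw [← blowUpProfile_eq_div hβ0 hγ.le hk hr.2]
    linarith [hbound r hr]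
  · linarith [hbound r (Ico_subset_Icc_self hr), blowUpProfile_le_rpow_neg hβ0 hγ hk hr.2]

theorem blow_up_upper_bound
    (T β γ k : ℝ) (hT : 0 < T) (hβ0 : 0 < β) (hβ1 : β ≤ 1) (hγ : 0 < γ) (hk : 0 ≤ k)
    (μ : Measure ℝ) [IsFiniteMeasure μ]
    (v : ℝ → ℝ)
    (hv_nonneg : ∀ t ∈ Icc (0:ℝ) T, 0 ≤ v t)
    (hv_int : IntegrableOn (fun s => v s ^ (1 + β)) (Icc (0:ℝ) T))
    (heq : ∀ t ∈ Icc (0:ℝ) T,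
        v t = k + (μ (Icc t T)).toReal - γ * ∫ s in t..T, v s ^ (1 + β)) :
    (∀ r ∈ Icc (0:ℝ) T,
        v r ≤ (μ (Icc r T)).toReal + k / (1 + γ * β * (T - r) * k ^ β) ^ (1 / β)) ∧
      ∀ r ∈ Ico (0:ℝ) T,
        v r ≤ (μ (Icc r T)).toReal + (γ * β * (T - r)) ^ (-(1 / β)) :=
  blow_up_upper_bound_general T β γ k hβ0 hγ hk μ v hv_int heq
end

section
/- Let x:[0,T]→ℝ be absolutely continuous with x(0)=x₀>0 and x(T)=0, and suppose x is not monotone (i.e., x' takes both signs on sets of positive measure). Define y(t) := x₀ + ∫_0^t x'(s)·1_{x'(s)<0} ds and τ := inf{t≥0 : y(t)=0}. Then y is nonincreasing, τ ≤ T, and the function x̃(t) := y(t∧τ) is absolutely continuous with x̃(0)=x₀, x̃(T)=0, and ∫_0^T |x̃'(t)|^p w(t) dt ≤ ∫_0^T |x'(t)|^p w(t) dt for every measurable w:[0,T]→ℝ₊, with strict inequality if w>0 a.e. and x is not monotone. -/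
/-!
Replacing `x'` by its negative part `min x' 0` can only lower `|x'|`, and lowers it strictly on the
set where `x' > 0`, which has positive measure. The resulting `y` starts at `x₀`, is nonincreasing,
and ends at `y T ≤ x T = 0`, so by the intermediate value theorem it reaches `0` at a first time
`τ ≤ T`; freezing it there keeps the derivative pointwise dominated by `|x'|`, whence the cost
comparison (strict as soon as the weight is a.e. positive).
-/

open MeasureTheory Set

lemma abs_min_zero_le (a : ℝ) : |min a 0| ≤ |a| := by
  rcases le_total a 0 with h | h <;> simp [h]

lemma abs_ite_min_zero_le (c : Prop) [Decidable c] (a : ℝ) :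
    |if c then min a 0 else 0| ≤ |a| := by
  split_ifs
  · exact abs_min_zero_le a
  · simp

lemma abs_ite_min_zero_lt (c : Prop) [Decidable c] {a : ℝ} (ha : 0 < a) :
    |if c then min a 0 else 0| < |a| := by
  simp [ha.le, ha.ne']

lemma antitoneOn_primitive_of_nonpos {f : ℝ → ℝ} {μ : Measure ℝ} {a b : ℝ}
    (hf : IntervalIntegrable f μ a b) (hf0 : ∀ s, f s ≤ 0) :
    AntitoneOn (fun t => ∫ s in a..t, f s ∂μ) (Icc a b) := by
  intro s hs t ht hst
  have hsub : ∀ {c d}, c ∈ Icc a b → d ∈ Icc a b → IntervalIntegrable f μ c d := fun hc hd =>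
    hf.mono_set (uIcc_subset_uIcc (Icc_subset_uIcc hc) (Icc_subset_uIcc hd))
  have hst_nonpos : ∫ r in s..t, f r ∂μ ≤ 0 := by
    rw [intervalIntegral.integral_of_le hst]
    exact setIntegral_nonpos measurableSet_Ioc fun r _ => hf0 r
  have ha : a ∈ Icc a b := left_mem_Icc.2 (hs.1.trans hs.2)
  show ∫ r in a..t, f r ∂μ ≤ ∫ r in a..s, f r ∂μ
  rw [← intervalIntegral.integral_add_adjacent_intervals (hsub ha hs) (hsub hs ht)]
  linarith

/-- Only the values of `y` on `[a, b]` matter: a zero there exists and bounds every later one. -/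
lemma ContinuousOn.sInf_zeros_mem_Icc {y : ℝ → ℝ} {a b : ℝ} (hab : a ≤ b)
    (hy : ContinuousOn y (Icc a b)) (ha : 0 ≤ y a) (hb : y b ≤ 0) :
    sInf {t | a ≤ t ∧ y t = 0} ∈ Icc a b ∧ y (sInf {t | a ≤ t ∧ y t = 0}) = 0 := by
  obtain ⟨c, hc, hyc⟩ := intermediate_value_Icc' hab hy ⟨hb, ha⟩
  set Z := Icc a b ∩ y ⁻¹' {0}
  have hZ_bdd : BddBelow Z := bddBelow_Icc.mono inter_subset_left
  have hZ_mem : sInf Z ∈ Z :=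
    (hy.preimage_isClosed_of_isClosed isClosed_Icc isClosed_singleton).csInf_mem ⟨c, hc, hyc⟩
      hZ_bdd
  have hleast : IsLeast {t | a ≤ t ∧ y t = 0} (sInf Z) := by
    refine ⟨⟨hZ_mem.1.1, hZ_mem.2⟩, fun t ⟨hat, hyt⟩ => ?_⟩
    rcases le_or_gt t b with htb | hbt
    · exact csInf_le hZ_bdd ⟨⟨hat, htb⟩, hyt⟩
    · exact (csInf_le hZ_bdd ⟨hc, hyc⟩).trans (hc.2.trans hbt.le)
  rw [hleast.csInf_eq]
  exact ⟨hZ_mem.1, hZ_mem.2⟩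

lemma integral_indicator_Iio_eq_integral_min {f : ℝ → ℝ} {a t τ : ℝ} (hat : a ≤ t) (haτ : a ≤ τ) :
    ∫ s in a..t, (Iio τ).indicator f s = ∫ s in a..min t τ, f s := by
  rw [intervalIntegral.integral_of_le hat, intervalIntegral.integral_of_le (le_min hat haτ),
    setIntegral_indicator measurableSet_Iio, ← Ioc_inter_Iic]
  exact setIntegral_congr_set ((ae_eq_refl _).inter Iio_ae_eq_Iic)

section WeightedCost

variable {α : Type*} [MeasurableSpace α] {μ : Measure α} {u v w : α → ℝ} {p : ℝ}

lemma integral_rpow_abs_mul_le_of_abs_le (hp : 0 ≤ p) (hw0 : ∀ t, 0 ≤ w t)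
    (hv : Integrable (fun t => |v t| ^ p * w t) μ) (huv : ∀ t, |u t| ≤ |v t|) :
    ∫ t, |u t| ^ p * w t ∂μ ≤ ∫ t, |v t| ^ p * w t ∂μ :=
  integral_mono_of_nonneg (ae_of_all _ fun t => mul_nonneg (by positivity) (hw0 t)) hv
    (ae_of_all _ fun t => mul_le_mul_of_nonneg_right (Real.rpow_le_rpow (abs_nonneg _) (huv t) hp)
      (hw0 t))

lemma integral_rpow_abs_mul_lt_of_abs_le (hp : 0 < p) (hu : Measurable u) (hw : Measurable w)
    (hw0 : ∀ t, 0 ≤ w t) (hv : Integrable (fun t => |v t| ^ p * w t) μ)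
    (huv : ∀ t, |u t| ≤ |v t|) (hwpos : ∀ᵐ t ∂μ, 0 < w t) (hlt : μ {t | |u t| < |v t|} ≠ 0) :
    ∫ t, |u t| ^ p * w t ∂μ < ∫ t, |v t| ^ p * w t ∂μ := by
  have hle : ∀ t, |u t| ^ p * w t ≤ |v t| ^ p * w t := fun t =>
    mul_le_mul_of_nonneg_right (Real.rpow_le_rpow (abs_nonneg _) (huv t) hp.le) (hw0 t)
  have hu_int : Integrable (fun t => |u t| ^ p * w t) μ :=
    hv.mono' (by fun_prop) (ae_of_all _ fun t => by
      rw [Real.norm_of_nonneg (mul_nonneg (by positivity) (hw0 t))]; exact hle t)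
  rw [← sub_pos, ← integral_sub hv hu_int, integral_pos_iff_support_of_nonneg_ae
    (ae_of_all _ fun t => sub_nonneg.2 (hle t)) (hv.sub hu_int)]
  refine pos_iff_ne_zero.2 (mt (fun h => measure_mono_null ?_ (measure_union_null h
    (ae_iff.1 hwpos))) hlt)
  intro t ht
  by_cases hwt : 0 < w t
  · exact Or.inl (sub_ne_zero.2
      (mul_lt_mul_of_pos_right (Real.rpow_lt_rpow (abs_nonneg _) ht hp) hwt).ne')
  · exact Or.inr hwt

end WeightedCost

theorem monotone_improvement_general
    (T x₀ p : ℝ) (hT : 0 < T) (hp : 2 ≤ p) (hx₀ : 0 < x₀)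
    (x x' : ℝ → ℝ)
    (hx'_meas : Measurable x')
    (hx'_int : IntervalIntegrable x' volume 0 T)
    (hFTC : ∀ t ∈ Icc (0:ℝ) T, x t = x₀ + ∫ s in (0:ℝ)..t, x' s)
    (hxT : x T = 0)
    (hnotmono : 0 < volume {t ∈ Icc (0:ℝ) T | x' t < 0} ∧
        0 < volume {t ∈ Icc (0:ℝ) T | 0 < x' t})
    (y : ℝ → ℝ)
    (hy : ∀ t, y t = x₀ + ∫ s in (0:ℝ)..t, min (x' s) 0)
    (τ : ℝ) (hτ : τ = sInf {t : ℝ | 0 ≤ t ∧ y t = 0})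
    (xt' : ℝ → ℝ) (hxt' : ∀ t, xt' t = if t < τ then min (x' t) 0 else 0)
    (xt : ℝ → ℝ) (hxt : ∀ t, xt t = y (min t τ)) :
    AntitoneOn y (Icc (0:ℝ) T) ∧
    τ ≤ T ∧
    xt 0 = x₀ ∧ xt T = 0 ∧
    (∀ t ∈ Icc (0:ℝ) T, xt t = x₀ + ∫ s in (0:ℝ)..t, xt' s) ∧
    (∀ w : ℝ → ℝ, (∀ t, 0 ≤ w t) → Measurable w →
        IntegrableOn (fun t => |x' t| ^ p * w t) (Icc (0:ℝ) T) →
        ((∫ t in (0:ℝ)..T, |xt' t| ^ p * w t) ≤ ∫ t in (0:ℝ)..T, |x' t| ^ p * w t ∧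
          ((∀ᵐ t ∂(volume.restrict (Icc (0:ℝ) T)), 0 < w t) →
            (∫ t in (0:ℝ)..T, |xt' t| ^ p * w t) < ∫ t in (0:ℝ)..T, |x' t| ^ p * w t))) := by
  set f : ℝ → ℝ := fun s => min (x' s) 0
  have hf_int : IntervalIntegrable f volume 0 T :=
    hx'_int.mono_fun (hx'_meas.min measurable_const).aestronglyMeasurable
      (ae_of_all _ fun s => abs_min_zero_le (x' s))
  have hanti : AntitoneOn y (Icc 0 T) := fun s hs t ht hst => by
    rw [hy, hy]
    linarith [antitoneOn_primitive_of_nonpos hf_int (fun s => min_le_right (x' s) 0) hs ht hst]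
  have hy_cont : ContinuousOn y (Icc 0 T) := by
    have := intervalIntegral.continuousOn_primitive_interval' hf_int left_mem_uIcc
    rw [uIcc_of_le hT.le] at this
    exact (continuousOn_const.add this).congr fun t _ => hy t
  have hy0 : y 0 = x₀ := by simp [hy]
  have hyT : y T ≤ 0 := by
    have := intervalIntegral.integral_mono_on hT.le hf_int hx'_int fun s _ => min_le_left (x' s) 0
    linarith [hy T, hFTC T (right_mem_Icc.2 hT.le)]
  obtain ⟨hτ_mem, hyτ⟩ := hτ ▸ hy_cont.sInf_zeros_mem_Icc hT.le (hy0 ▸ hx₀.le) hyT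
  have hxt'_ind : xt' = (Iio τ).indicator f := funext fun t => by simp [hxt', indicator, f]
  have habs : ∀ t, |xt' t| ≤ |x' t| := fun t => (hxt' t).symm ▸ abs_ite_min_zero_le _ _
  have hpos_lt : {t | 0 < x' t} ⊆ {t | |xt' t| < |x' t|} := fun t ht => by
    simpa only [mem_ofPred_eq, hxt'] using abs_ite_min_zero_lt (t < τ) ht
  refine ⟨hanti, hτ_mem.2, by rw [hxt, min_eq_left hτ_mem.1, hy0],
    by rw [hxt, min_eq_right hτ_mem.2, hyτ], fun t ht => ?_, fun w hw0 hw hw_int => ?_⟩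
  · rw [hxt, hy, hxt'_ind, integral_indicator_Iio_eq_integral_min ht.1 hτ_mem.1]
  simp only [intervalIntegral.integral_of_le hT.le, ← integral_Icc_eq_integral_Ioc]
  refine ⟨integral_rpow_abs_mul_le_of_abs_le (by linarith) hw0 hw_int habs, fun hwpos =>
    integral_rpow_abs_mul_lt_of_abs_le (by linarith) ?_ hw hw0 hw_int habs hwpos ?_⟩
  · rw [hxt'_ind]
    exact (hx'_meas.min measurable_const).indicator measurableSet_Iio
  · rw [Measure.restrict_apply' measurableSet_Icc]
    refine (hnotmono.2.trans_le (measure_mono ?_)).ne'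
    exact fun t h => ⟨hpos_lt h.2, h.1⟩

theorem monotone_improvement
    (T x₀ p : ℝ) (hT : 0 < T) (hp : 2 ≤ p) (hx₀ : 0 < x₀)
    (x x' : ℝ → ℝ)
    (hx'_meas : Measurable x')
    (hx'_int : IntervalIntegrable x' volume 0 T)
    (hFTC : ∀ t ∈ Icc (0:ℝ) T, x t = x₀ + ∫ s in (0:ℝ)..t, x' s)
    (hx0 : x 0 = x₀) (hxT : x T = 0)
    (hnotmono : 0 < volume {t ∈ Icc (0:ℝ) T | x' t < 0} ∧
        0 < volume {t ∈ Icc (0:ℝ) T | 0 < x' t})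
    (y : ℝ → ℝ)
    (hy : ∀ t, y t = x₀ + ∫ s in (0:ℝ)..t, min (x' s) 0)
    (τ : ℝ) (hτ : τ = sInf {t : ℝ | 0 ≤ t ∧ y t = 0})
    (xt' : ℝ → ℝ) (hxt' : ∀ t, xt' t = if t < τ then min (x' t) 0 else 0)
    (xt : ℝ → ℝ) (hxt : ∀ t, xt t = y (min t τ)) :
    AntitoneOn y (Icc (0:ℝ) T) ∧
    τ ≤ T ∧
    xt 0 = x₀ ∧ xt T = 0 ∧
    (∀ t ∈ Icc (0:ℝ) T, xt t = x₀ + ∫ s in (0:ℝ)..t, xt' s) ∧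
    (∀ w : ℝ → ℝ, (∀ t, 0 ≤ w t) → Measurable w →
        IntegrableOn (fun t => |x' t| ^ p * w t) (Icc (0:ℝ) T) →
        ((∫ t in (0:ℝ)..T, |xt' t| ^ p * w t) ≤ ∫ t in (0:ℝ)..T, |x' t| ^ p * w t ∧
          ((∀ᵐ t ∂(volume.restrict (Icc (0:ℝ) T)), 0 < w t) →
            (∫ t in (0:ℝ)..T, |xt' t| ^ p * w t) < ∫ t in (0:ℝ)..T, |x' t| ^ p * w t))) :=
  monotone_improvement_general T x₀ p hT hp hx₀ x x' hx'_meas hx'_int hFTC hxT hnotmono y hy τ hτ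
    xt' hxt' xt hxt
end
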